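/- arXiv:1008.3943 — 3 statements merged into one kernel-verified Lean document; each statement's English description precedes it below -/
import Mathlib

section
/- Let w be a nonnegative locally integrable function and let D' be a finite collection of dyadic subintervals of a fixed dyadic interval Q₀ with w(Q₀) > 0. Then there exists a corona decomposition of D' relative to w: a collection L of dyadic intervals containing Q₀ such that (i) whenever L' ⊊ L with L, L' ∈ L, one has w(L')/|L'| ≥ 4 w(L)/|L|, and (ii) for every I ∈ D', if Γ(I) denotes the minimal element of L containing I, then w(I)/|I| < 4 w(Γ(I))/|Γ(I)|. -/
open MeasureTheory Set

/-- The dyadic interval `[2^k m, 2^k (m+1))`. -/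
noncomputable def dyadicI (q : ℤ × ℤ) : Set ℝ := Set.Ico ((2:ℝ)^q.1 * q.2) ((2:ℝ)^q.1 * (q.2+1))

/-- `w(I) = ∫_I w` for a dyadic interval described by its parameters. -/
noncomputable def wInt (w : ℝ → ℝ) (q : ℤ × ℤ) : ℝ := ∫ x in dyadicI q, w x

/-- `|I| = 2^k` for the dyadic interval `dyadicI (k, m)`. -/
noncomputable def len (q : ℤ × ℤ) : ℝ := (2:ℝ)^q.1

/-!
Only the averages `f(I) = w(I)/|I|` matter, and only through `f(Q₀) > 0`. Going down the dyadic
tree from `Q₀`, `Γ(q)` is `q` itself if `f(q) ≥ 4 f(Γ(parent q))` and `Γ(parent q)` otherwise;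
`𝓛` is the set of fixed points of `Γ`. By induction `f(Γ(q)) ≥ f(L)` for every `L ∈ 𝓛` above `q`;
this needs `f(L) ≥ 0` (so that `4 f ≥ f`), which holds because `f(L) ≥ f(Q₀) > 0`. A selected
`L' ⊊ L` then has `f(L') ≥ 4 f(Γ(parent L')) ≥ 4 f(L)`, and any `I` not selected has
`f(I) < 4 f(Γ(I))` by construction.
-/

lemma dyadic_left_lt_right (q : ℤ × ℤ) : (2:ℝ)^q.1 * q.2 < (2:ℝ)^q.1 * (q.2 + 1) := by
  have : (0:ℝ) < 2^q.1 := by positivity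
  linarith

lemma fst_le_of_dyadicI_subset {q Q : ℤ × ℤ} (h : dyadicI q ⊆ dyadicI Q) : q.1 ≤ Q.1 := by
  obtain ⟨h₁, h₂⟩ := (Ico_subset_Ico_iff (dyadic_left_lt_right q)).1 h
  exact (zpow_le_zpow_iff_right₀ (by norm_num : (1:ℝ) < 2)).1 (by linarith)

lemma dyadicI_subset_iff_of_fst_eq_add {q Q : ℤ × ℤ} (j : ℕ) (hQ : Q.1 = q.1 + j) :
    dyadicI q ⊆ dyadicI Q ↔ Q.2 = q.2 / 2 ^ j := by
  have h2k : (0:ℝ) < 2^q.1 := by positivity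
  have hpow : (2:ℝ)^Q.1 = 2^q.1 * ((2 ^ j : ℤ) : ℝ) := by
    rw [hQ, zpow_add₀ two_ne_zero, zpow_natCast, Int.cast_pow, Int.cast_ofNat]
  rw [dyadicI, dyadicI, Ico_subset_Ico_iff (dyadic_left_lt_right q), hpow, mul_assoc, mul_assoc,
    mul_le_mul_iff_right₀ h2k, mul_le_mul_iff_right₀ h2k]
  have h2j : (0:ℤ) < 2 ^ j := by positivity
  generalize (2:ℤ) ^ j = d at *
  norm_cast
  rw [eq_comm, Int.ediv_eq_iff_of_pos h2j]
  constructor <;> rintro ⟨h₁, h₂⟩ <;> constructor <;> linarith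

lemma eq_of_dyadicI_subset_of_fst_eq {q Q : ℤ × ℤ} (h : dyadicI q ⊆ dyadicI Q)
    (hfst : q.1 = Q.1) : q = Q := by
  have hsnd := (dyadicI_subset_iff_of_fst_eq_add 0 (by simpa using hfst.symm)).1 h
  rw [pow_zero, Int.ediv_one] at hsnd
  exact Prod.ext hfst hsnd.symm

lemma dyadicI_injective : Function.Injective dyadicI := fun _ _ h =>
  eq_of_dyadicI_subset_of_fst_eq h.le
    (le_antisymm (fst_le_of_dyadicI_subset h.le) (fst_le_of_dyadicI_subset h.ge))

lemma fst_lt_of_dyadicI_ssubset {q Q : ℤ × ℤ} (h : dyadicI q ⊂ dyadicI Q) : q.1 < Q.1 :=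
  (fst_le_of_dyadicI_subset h.le).lt_of_ne fun hfst =>
    h.ne (congrArg dyadicI (eq_of_dyadicI_subset_of_fst_eq h.le hfst))

def parent (q : ℤ × ℤ) : ℤ × ℤ := (q.1 + 1, q.2 / 2)

lemma dyadicI_ssubset_parent (q : ℤ × ℤ) : dyadicI q ⊂ dyadicI (parent q) := by
  refine ssubset_of_subset_of_ne ((dyadicI_subset_iff_of_fst_eq_add 1 rfl).2 rfl) fun h => ?_
  have := congrArg Prod.fst (dyadicI_injective h)
  simp [parent] at this

lemma dyadicI_parent_subset_of_ssubset {q Q : ℤ × ℤ} (h : dyadicI q ⊂ dyadicI Q) :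
    dyadicI (parent q) ⊆ dyadicI Q := by
  obtain ⟨j, hj⟩ : ∃ j : ℕ, Q.1 = q.1 + 1 + j :=
    ⟨(Q.1 - q.1 - 1).toNat, by have := fst_lt_of_dyadicI_ssubset h; omega⟩
  rw [dyadicI_subset_iff_of_fst_eq_add j hj, parent, Int.ediv_ediv_of_nonneg (by norm_num),
    ← pow_succ']
  exact (dyadicI_subset_iff_of_fst_eq_add (j + 1) (by push_cast; omega)).1 h.le

theorem dyadicI_induction {Q₀ : ℤ × ℤ} {motive : ∀ q, dyadicI q ⊆ dyadicI Q₀ → Prop}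
    (top : motive Q₀ subset_rfl)
    (step : ∀ q (h : dyadicI q ⊂ dyadicI Q₀),
      motive (parent q) (dyadicI_parent_subset_of_ssubset h) → motive q h.le)
    (q : ℤ × ℤ) (hq : dyadicI q ⊆ dyadicI Q₀) : motive q hq := by
  rcases hq.eq_or_ssubset with h | h
  · obtain rfl := dyadicI_injective h
    exact top
  · exact step q h (dyadicI_induction top step (parent q) _)
termination_by (Q₀.1 - q.1).toNat
decreasing_by have := fst_lt_of_dyadicI_ssubset h; simp only [parent]; omega

section Stopping

variable (f : ℤ × ℤ → ℝ) (Q₀ : ℤ × ℤ)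

/-- The paper's `Γ(q)`; only meaningful for `dyadicI q ⊆ dyadicI Q₀`. -/
noncomputable def stoppingInterval (q : ℤ × ℤ) : ℤ × ℤ :=
  if q.1 < Q₀.1 then
    let L := stoppingInterval (parent q)
    if 4 * f L ≤ f q then q else L
  else Q₀
termination_by (Q₀.1 - q.1).toNat
decreasing_by simp only [parent]; omega

def stoppingFamily : Set (ℤ × ℤ) :=
  {L | dyadicI L ⊆ dyadicI Q₀ ∧ stoppingInterval f Q₀ L = L}

variable {f Q₀}

lemma stoppingInterval_top : stoppingInterval f Q₀ Q₀ = Q₀ := by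
  rw [stoppingInterval, if_neg (lt_irrefl _)]

lemma stoppingInterval_of_ssubset {q : ℤ × ℤ} (h : dyadicI q ⊂ dyadicI Q₀) :
    stoppingInterval f Q₀ q =
      if 4 * f (stoppingInterval f Q₀ (parent q)) ≤ f q then q
      else stoppingInterval f Q₀ (parent q) := by
  rw [stoppingInterval, if_pos (fst_lt_of_dyadicI_ssubset h)]

lemma subset_stoppingInterval {q : ℤ × ℤ} (hq : dyadicI q ⊆ dyadicI Q₀) :
    dyadicI q ⊆ dyadicI (stoppingInterval f Q₀ q) ∧
      dyadicI (stoppingInterval f Q₀ q) ⊆ dyadicI Q₀ := by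
  induction q, hq using dyadicI_induction with
  | top => simp [stoppingInterval_top]
  | step q hq ih =>
    rw [stoppingInterval_of_ssubset hq]
    split_ifs
    · exact ⟨subset_rfl, hq.le⟩
    · exact ⟨(dyadicI_ssubset_parent q).le.trans ih.1, ih.2⟩

lemma stoppingInterval_mem {q : ℤ × ℤ} (hq : dyadicI q ⊆ dyadicI Q₀) :
    stoppingInterval f Q₀ q ∈ stoppingFamily f Q₀ := by
  refine ⟨(subset_stoppingInterval hq).2, ?_⟩
  induction q, hq using dyadicI_induction with
  | top => simp [stoppingInterval_top]
  | step q hq ih =>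
    rw [stoppingInterval_of_ssubset hq]
    split_ifs with hstop
    · rw [stoppingInterval_of_ssubset hq, if_pos hstop]
    · exact ih

lemma stoppingInterval_subset_and_le {L : ℤ × ℤ} (hL : L ∈ stoppingFamily f Q₀) (hL₀ : 0 ≤ f L)
    {q : ℤ × ℤ} (hqL : dyadicI q ⊆ dyadicI L) :
    dyadicI (stoppingInterval f Q₀ q) ⊆ dyadicI L ∧ f L ≤ f (stoppingInterval f Q₀ q) := by
  induction q, hqL using dyadicI_induction with
  | top => rw [hL.2]; exact ⟨subset_rfl, le_rfl⟩
  | step q hq ih =>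
    rw [stoppingInterval_of_ssubset (hq.trans_subset hL.1)]
    split_ifs with hstop
    · exact ⟨hq.le, by linarith [ih.2]⟩
    · exact ih

lemma le_stoppingInterval (hf : 0 ≤ f Q₀) {q : ℤ × ℤ} (hq : dyadicI q ⊆ dyadicI Q₀) :
    f Q₀ ≤ f (stoppingInterval f Q₀ q) :=
  (stoppingInterval_subset_and_le ⟨subset_rfl, stoppingInterval_top⟩ hf hq).2

lemma le_of_mem_stoppingFamily (hf : 0 ≤ f Q₀) {L : ℤ × ℤ} (hL : L ∈ stoppingFamily f Q₀) :
    f Q₀ ≤ f L :=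
  hL.2 ▸ le_stoppingInterval hf hL.1

lemma four_mul_le_of_mem_stoppingFamily (hf : 0 ≤ f Q₀) {L L' : ℤ × ℤ}
    (hL : L ∈ stoppingFamily f Q₀) (hL' : L' ∈ stoppingFamily f Q₀) (h : dyadicI L' ⊂ dyadicI L) :
    4 * f L ≤ f L' := by
  have hfix := hL'.2
  rw [stoppingInterval_of_ssubset (h.trans_subset hL.1)] at hfix
  split_ifs at hfix with hstop
  · have := (stoppingInterval_subset_and_le hL (hf.trans (le_of_mem_stoppingFamily hf hL))
      (dyadicI_parent_subset_of_ssubset h)).2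
    linarith
  · have hparent := (subset_stoppingInterval (f := f) (dyadicI_parent_subset_of_ssubset
      (h.trans_subset hL.1))).1
    rw [hfix] at hparent
    exact absurd hparent (dyadicI_ssubset_parent L').not_subset

lemma lt_four_mul_stoppingInterval (hf : 0 < f Q₀) {q : ℤ × ℤ} (hq : dyadicI q ⊆ dyadicI Q₀) :
    f q < 4 * f (stoppingInterval f Q₀ q) := by
  have hpos := hf.trans_le (le_stoppingInterval hf.le hq)
  rcases hq.eq_or_ssubset with h | h
  · obtain rfl := dyadicI_injective h
    rw [stoppingInterval_top] at hpos ⊢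
    linarith
  · rw [stoppingInterval_of_ssubset h] at hpos ⊢
    split_ifs at hpos ⊢ with hstop
    · linarith
    · exact lt_of_not_ge hstop

end Stopping

theorem stmt12_general (w : ℝ → ℝ)
    (Q₀ : ℤ × ℤ) (D' : Finset (ℤ × ℤ))
    (hD' : ∀ q ∈ D', dyadicI q ⊆ dyadicI Q₀)
    (hQ₀ : 0 < wInt w Q₀) :
    ∃ 𝓛 : Set (ℤ × ℤ),
      Q₀ ∈ 𝓛 ∧
      (∀ L ∈ 𝓛, dyadicI L ⊆ dyadicI Q₀) ∧
      (∀ L ∈ 𝓛, ∀ L' ∈ 𝓛, dyadicI L' ⊂ dyadicI L →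
        4 * (wInt w L / len L) ≤ wInt w L' / len L') ∧
      (∀ I ∈ D', ∃ L ∈ 𝓛, dyadicI I ⊆ dyadicI L ∧
        (∀ L' ∈ 𝓛, dyadicI I ⊆ dyadicI L' → dyadicI L ⊆ dyadicI L') ∧
        wInt w I / len I < 4 * (wInt w L / len L)) := by
  set f : ℤ × ℤ → ℝ := fun q => wInt w q / len q
  have hf : 0 < f Q₀ := div_pos hQ₀ (by unfold len; positivity)
  refine ⟨stoppingFamily f Q₀, ⟨subset_rfl, stoppingInterval_top⟩, fun L hL => hL.1,
    fun L hL L' hL' h => four_mul_le_of_mem_stoppingFamily hf.le hL hL' h, fun I hI => ?_⟩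
  have hI₀ := hD' I hI
  exact ⟨stoppingInterval f Q₀ I, stoppingInterval_mem hI₀, (subset_stoppingInterval hI₀).1,
    fun L' hL' hIL' => (stoppingInterval_subset_and_le hL'
      (hf.le.trans (le_of_mem_stoppingFamily hf.le hL')) hIL').1,
    lt_four_mul_stoppingInterval hf hI₀⟩

/-- Existence of a corona decomposition relative to `w` of a finite family `D'` of
dyadic subintervals of a fixed dyadic `Q₀` with `w(Q₀) > 0`: a stopping collection
`𝓛 ∋ Q₀` of dyadic subintervals of `Q₀` such that (i) strictly nested members have
density increased by a factor at least 4, and (ii) every `I ∈ D'` has a minimal member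
`Γ(I)` of `𝓛` containing it, with `w(I)/|I| < 4 w(Γ(I))/|Γ(I)|`. -/
theorem stmt12 (w : ℝ → ℝ) (hw : ∀ x, 0 ≤ w x) (hwl : LocallyIntegrable w volume)
    (Q₀ : ℤ × ℤ) (D' : Finset (ℤ × ℤ))
    (hD' : ∀ q ∈ D', dyadicI q ⊆ dyadicI Q₀)
    (hQ₀ : 0 < wInt w Q₀) :
    ∃ 𝓛 : Set (ℤ × ℤ),
      Q₀ ∈ 𝓛 ∧
      (∀ L ∈ 𝓛, dyadicI L ⊆ dyadicI Q₀) ∧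
      (∀ L ∈ 𝓛, ∀ L' ∈ 𝓛, dyadicI L' ⊂ dyadicI L →
        4 * (wInt w L / len L) ≤ wInt w L' / len L') ∧
      (∀ I ∈ D', ∃ L ∈ 𝓛, dyadicI I ⊆ dyadicI L ∧
        (∀ L' ∈ 𝓛, dyadicI I ⊆ dyadicI L' → dyadicI L ⊆ dyadicI L') ∧
        wInt w I / len I < 4 * (wInt w L / len L)) :=
  stmt12_general w Q₀ D' hD' hQ₀
end

section
/- In the inductive construction, for each j ≥ 0 and each stopping interval L ∈ L_j, the total measure is preserved when passing to the next stage: μ_{j+1}(L) = μ_j(L). Consequently μ_i(L) = μ_j(L) for all i ≥ j. -/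
open MeasureTheory Set

/-- The `i`-th interval `I_i` of the chain `Ξ_L` of the dyadic interval `L = dyadicI q`:
the unique dyadic interval of length `4^{-i}|L|` inside `L` containing the jumping
point `jp(L)` in its left half. -/
def chainI (q : ℤ × ℤ) (i : ℕ) : ℤ × ℤ := (q.1 - 2*i, 4^i * q.2 + (4^i - 1)/3)

/-- The element `I_i⁺` of `Ξ_L⁺`: the right half of `I_i`. -/
def xiPlus (q : ℤ × ℤ) (i : ℕ) : ℤ × ℤ := ((chainI q i).1 - 1, 2 * (chainI q i).2 + 1)

/-- `L'(I_i⁺) = (I_i⁺)^{--}`, the left half of the left half of `I_i⁺`. -/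
def Lprime (q : ℤ × ℤ) (i : ℕ) : ℤ × ℤ := ((chainI q i).1 - 3, 4 * (2 * (chainI q i).2 + 1))

/-- The generations `𝓛_j` of stopping intervals of the inductive construction:
`𝓛_0 = {[0,1)}` and `𝓛_{j+1} = ⋃_{L ∈ 𝓛_j} {L'(I) : I ∈ Ξ_L⁺}`. -/
noncomputable def Lgen (k : ℕ) : ℕ → Finset (ℤ × ℤ)
  | 0 => {((0:ℤ), (0:ℤ))}
  | j+1 => (Lgen k j).biUnion (fun q => (Finset.range (2*k)).image (Lprime q))

/-- The support `[jp(K), rep(K))` of the measure `μ_K^λ` (the right two thirds of `K`). -/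
noncomputable def suppOf (q : ℤ × ℤ) : Set ℝ :=
  Set.Ico ((2:ℝ)^q.1 * q.2 + (2:ℝ)^q.1 / 3) ((2:ℝ)^q.1 * (q.2+1))

/-- The density of the stage-`j` measure `μ_j` of the inductive construction:
`μ_j = ∑_{i=0}^{j-1} ∑_{L ∈ 𝓛_i} μ_{I(L)}^{6^i} + ∑_{L' ∈ 𝓛_j} μ_{L'}^{6^j}`,
where `I(L) = chainI L (2k)` is the minimal element of `Ξ_L`. -/
noncomputable def muDensity (k j : ℕ) (x : ℝ) : ℝ :=
  (∑ i ∈ Finset.range j,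
    (6:ℝ)^i * Set.indicator (⋃ q ∈ Lgen k i, suppOf (chainI q (2*k))) (fun _ => 1) x)
  + (6:ℝ)^j * Set.indicator (⋃ q ∈ Lgen k j, suppOf q) (fun _ => 1) x


/-!
Passing from `μ_i` to `μ_{i+1}` only changes the measure inside each `r ∈ 𝓛_i`: density `6^i`
on `suppOf r` is replaced by density `6^i` on `suppOf I(r)` plus density `6^{i+1}` on the sets
`L'(I)`, `I ∈ Ξ_r⁺`. Walking down the chain `I_0 = r ⊇ I_1 ⊇ ⋯ ⊇ I_{2k} = I(r)`, the mass
`6^i |I_t⁺|` lost by shrinking `suppOf I_t` to `suppOf I_{t+1}` is exactly the mass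
`6^{i+1} |suppOf L'(I_t⁺)|` gained, so the total mass in `r` is unchanged. The stopping intervals
form a tree of dyadic intervals, so each `r ∈ 𝓛_i` is either inside or disjoint from a given
`L ∈ 𝓛_j`, `j ≤ i`; hence `μ_{i+1}(L) = μ_i(L)`.
-/

lemma chainI_zero (q : ℤ × ℤ) : chainI q 0 = q := by
  simp [chainI]

lemma chainI_succ (q : ℤ × ℤ) (i : ℕ) :
    chainI q (i + 1) = ((chainI q i).1 - 2, 4 * (chainI q i).2 + 1) := by
  have h₁ : 3 * ((4 ^ i - 1) / 3) = (4 : ℤ) ^ i - 1 :=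
    Int.mul_ediv_cancel' (by simpa using sub_dvd_pow_sub_pow (4 : ℤ) 1 i)
  have h₂ : 3 * ((4 ^ (i + 1) - 1) / 3) = (4 : ℤ) ^ (i + 1) - 1 :=
    Int.mul_ediv_cancel' (by simpa using sub_dvd_pow_sub_pow (4 : ℤ) 1 (i + 1))
  rw [pow_succ] at h₂
  simp only [chainI, Prod.mk.injEq, pow_succ]
  constructor
  · push_cast; ring
  · have : 4 ^ i * 4 * q.2 = 4 * (4 ^ i * q.2) := by ring
    omega

lemma two_zpow_add_natCast (a : ℤ) (e : ℕ) : (2 : ℝ) ^ (a + e) = 2 ^ a * 2 ^ e := by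
  rw [zpow_add₀ two_ne_zero, zpow_natCast]

lemma dyadicI_subset {a b m n : ℤ} (e : ℕ) (hb : b = a + e)
    (h₁ : 2 ^ e * n ≤ m) (h₂ : m < 2 ^ e * (n + 1)) : dyadicI (a, m) ⊆ dyadicI (b, n) := by
  have h₁' : (2 : ℝ) ^ e * n ≤ m := by exact_mod_cast h₁
  have h₂' : (m : ℝ) + 1 ≤ 2 ^ e * (n + 1) := by exact_mod_cast Int.add_one_le_of_lt h₂
  have h2a : (0 : ℝ) < 2 ^ a := by positivity
  simp only [dyadicI, hb, two_zpow_add_natCast]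
  apply Ico_subset_Ico <;> nlinarith

lemma disjoint_dyadicI {a b m n : ℤ} (h : (2 : ℝ) ^ a * (m + 1) ≤ 2 ^ b * n) :
    Disjoint (dyadicI (a, m)) (dyadicI (b, n)) :=
  Ico_disjoint_Ico.2 (le_trans (min_le_left _ _) (h.trans (le_max_right _ _)))

lemma antitone_dyadicI_chainI (q : ℤ × ℤ) : Antitone fun i => dyadicI (chainI q i) := by
  refine antitone_nat_of_succ_le fun i => ?_
  rw [chainI_succ]
  generalize chainI q i = c
  exact dyadicI_subset 2 (by push_cast; ring) (by omega) (by omega)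

lemma dyadicI_chainI_subset (q : ℤ × ℤ) (i : ℕ) : dyadicI (chainI q i) ⊆ dyadicI q := by
  simpa [chainI_zero] using antitone_dyadicI_chainI q (Nat.zero_le i)

lemma dyadicI_Lprime_subset_chainI (q : ℤ × ℤ) (t : ℕ) :
    dyadicI (Lprime q t) ⊆ dyadicI (chainI q t) := by
  unfold Lprime
  generalize chainI q t = c
  exact dyadicI_subset 3 (by push_cast; ring) (by omega) (by omega)

lemma dyadicI_Lprime_subset (q : ℤ × ℤ) (t : ℕ) : dyadicI (Lprime q t) ⊆ dyadicI q :=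
  (dyadicI_Lprime_subset_chainI q t).trans (dyadicI_chainI_subset q t)

-- `I_{t+1}` ends exactly where `L'(I_t⁺)` starts.
lemma disjoint_dyadicI_chainI_succ_Lprime (q : ℤ × ℤ) (t : ℕ) :
    Disjoint (dyadicI (chainI q (t + 1))) (dyadicI (Lprime q t)) := by
  rw [chainI_succ]
  unfold Lprime
  generalize chainI q t = c
  apply disjoint_dyadicI
  have h : (2 : ℝ) ^ (c.1 - 2) = 2 ^ (c.1 - 3) * 2 := by
    rw [← zpow_add_one₀ two_ne_zero]; ring_nf
  rw [h]
  push_cast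
  ring_nf
  rfl

lemma disjoint_dyadicI_Lprime (q : ℤ × ℤ) {t t' : ℕ} (h : t < t') :
    Disjoint (dyadicI (Lprime q t)) (dyadicI (Lprime q t')) :=
  ((disjoint_dyadicI_chainI_succ_Lprime q t).mono_left
    ((dyadicI_Lprime_subset_chainI q t').trans (antitone_dyadicI_chainI q h))).symm

lemma mem_Lgen_succ {k j : ℕ} {r : ℤ × ℤ} :
    r ∈ Lgen k (j + 1) ↔ ∃ s ∈ Lgen k j, ∃ t < 2 * k, Lprime s t = r := by
  simp [Lgen]

lemma pairwiseDisjoint_Lgen (k j : ℕ) : (Lgen k j : Set (ℤ × ℤ)).PairwiseDisjoint dyadicI := by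
  induction j with
  | zero => simp [Lgen]
  | succ j ih =>
    rintro _ hp _ hp' hne
    obtain ⟨s, hs, t, -, rfl⟩ := mem_Lgen_succ.1 hp
    obtain ⟨s', hs', t', -, rfl⟩ := mem_Lgen_succ.1 hp'
    by_cases hss : s = s'
    · subst hss
      rcases lt_or_gt_of_ne (fun h : t = t' => hne (h ▸ rfl)) with h | h
      · exact disjoint_dyadicI_Lprime s h
      · exact (disjoint_dyadicI_Lprime s h).symm
    · exact (ih hs hs' hss).mono (dyadicI_Lprime_subset s t) (dyadicI_Lprime_subset s' t')

lemma dyadicI_subset_or_disjoint_of_mem_Lgen {k i j : ℕ} {q r : ℤ × ℤ} (hq : q ∈ Lgen k j)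
    (hji : j ≤ i) (hr : r ∈ Lgen k i) :
    dyadicI r ⊆ dyadicI q ∨ Disjoint (dyadicI r) (dyadicI q) := by
  induction i, hji using Nat.le_induction generalizing r with
  | base =>
    by_cases h : r = q
    · exact Or.inl (h ▸ subset_rfl)
    · exact Or.inr (pairwiseDisjoint_Lgen k j hr hq h)
  | succ i _ ih =>
    obtain ⟨s, hs, t, -, rfl⟩ := mem_Lgen_succ.1 hr
    exact (ih hs).imp (dyadicI_Lprime_subset s t).trans (·.mono_left (dyadicI_Lprime_subset s t))

-- `⋃_{I ∈ Ξ_L⁺} supp μ_{L'(I)}` for `L = dyadicI r`: where the next stage puts its top layer.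
def offspringSupport (k : ℕ) (r : ℤ × ℤ) : Set ℝ :=
  ⋃ t ∈ Finset.range (2 * k), suppOf (Lprime r t)

lemma measurableSet_suppOf (p : ℤ × ℤ) : MeasurableSet (suppOf p) := measurableSet_Ico

lemma suppOf_subset_dyadicI (p : ℤ × ℤ) : suppOf p ⊆ dyadicI p :=
  Ico_subset_Ico (le_add_of_nonneg_right (by positivity)) le_rfl

lemma volume_suppOf_ne_top (p : ℤ × ℤ) : volume (suppOf p) ≠ ⊤ :=
  measure_Ico_lt_top.ne

lemma measureReal_suppOf (p : ℤ × ℤ) : volume.real (suppOf p) = 2 ^ p.1 * (2 / 3) := by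
  rw [suppOf, Real.volume_real_Ico, max_eq_left (by ring_nf; positivity)]
  ring

lemma iUnion_suppOf_Lgen_succ (k i : ℕ) :
    ⋃ q ∈ Lgen k (i + 1), suppOf q = ⋃ r ∈ Lgen k i, offspringSupport k r := by
  simp only [Lgen, Finset.set_biUnion_biUnion, Finset.set_biUnion_finset_image, offspringSupport]

lemma measurableSet_offspringSupport (k : ℕ) (r : ℤ × ℤ) :
    MeasurableSet (offspringSupport k r) :=
  Finset.measurableSet_biUnion _ fun _ _ => measurableSet_suppOf _

lemma offspringSupport_subset_dyadicI (k : ℕ) (r : ℤ × ℤ) :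
    offspringSupport k r ⊆ dyadicI r :=
  iUnion₂_subset fun t _ => (suppOf_subset_dyadicI _).trans (dyadicI_Lprime_subset r t)

lemma measureReal_offspringSupport (k : ℕ) (r : ℤ × ℤ) :
    volume.real (offspringSupport k r) =
      ∑ t ∈ Finset.range (2 * k), volume.real (suppOf (Lprime r t)) := by
  refine measureReal_biUnion_finset (fun t _ t' _ h => ?_) (fun t _ => measurableSet_suppOf _)
    (fun _ _ => volume_suppOf_ne_top _)
  rcases lt_or_gt_of_ne h with h | h
  · exact (disjoint_dyadicI_Lprime r h).mono (suppOf_subset_dyadicI _) (suppOf_subset_dyadicI _)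
  · exact (disjoint_dyadicI_Lprime r h).symm.mono
      (suppOf_subset_dyadicI _) (suppOf_subset_dyadicI _)

-- Shrinking `suppOf I_t` to `suppOf I_{t+1}` frees the mass `|I_t⁺|`, which is what the
-- density `6` puts on `suppOf L'(I_t⁺)` (the paper's `μ_{j+1}(L'(I)) = μ_j(I)`).
lemma measureReal_suppOf_chainI_succ_add (r : ℤ × ℤ) (t : ℕ) :
    volume.real (suppOf (chainI r (t + 1))) + 6 * volume.real (suppOf (Lprime r t)) =
      volume.real (suppOf (chainI r t)) := by
  simp only [measureReal_suppOf, chainI_succ, Lprime]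
  have h₂ : (2 : ℝ) ^ ((chainI r t).1 - 2) = 2 ^ ((chainI r t).1 - 3) * 2 := by
    rw [← zpow_add_one₀ two_ne_zero]; ring_nf
  have h₃ : (2 : ℝ) ^ (chainI r t).1 = 2 ^ ((chainI r t).1 - 3) * 8 := by
    rw [show (chainI r t).1 = (chainI r t).1 - 3 + (3 : ℕ) by push_cast; ring,
      two_zpow_add_natCast]
    norm_num
  rw [h₂, h₃]
  ring

lemma measureReal_suppOf_chainI_add_sum (r : ℤ × ℤ) (n : ℕ) :
    volume.real (suppOf (chainI r n)) + 6 * ∑ t ∈ Finset.range n, volume.real (suppOf (Lprime r t))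
      = volume.real (suppOf r) := by
  induction n with
  | zero => simp [chainI_zero]
  | succ n ih =>
    rw [Finset.sum_range_succ, ← ih, ← measureReal_suppOf_chainI_succ_add r n]
    ring

lemma measureReal_restrict_mass_balance (k : ℕ) (r : ℤ × ℤ) {L : Set ℝ}
    (hL : dyadicI r ⊆ L ∨ Disjoint (dyadicI r) L) :
    (volume.restrict L).real (suppOf (chainI r (2 * k))) +
        6 * (volume.restrict L).real (offspringSupport k r) =
      (volume.restrict L).real (suppOf r) := by
  rcases hL with hL | hL
  · have hν : ∀ s ⊆ dyadicI r, (volume.restrict L).real s = volume.real s := fun s hs => by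
      simp only [Measure.real, Measure.restrict_eq_self _ (hs.trans hL)]
    rw [hν _ ((suppOf_subset_dyadicI _).trans (dyadicI_chainI_subset r _)),
      hν _ (offspringSupport_subset_dyadicI k r), hν _ (suppOf_subset_dyadicI r),
      measureReal_offspringSupport, measureReal_suppOf_chainI_add_sum]
  · have hν : ∀ s ⊆ dyadicI r, MeasurableSet s → (volume.restrict L).real s = 0 := fun s hs hm => by
      rw [measureReal_restrict_apply hm, (hL.mono_left hs).inter_eq, measureReal_empty]
    rw [hν _ ((suppOf_subset_dyadicI _).trans (dyadicI_chainI_subset r _))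
        (measurableSet_suppOf _),
      hν _ (offspringSupport_subset_dyadicI k r) (measurableSet_offspringSupport k r),
      hν _ (suppOf_subset_dyadicI r) (measurableSet_suppOf _)]
    ring

lemma measureReal_biUnion_Lgen (ν : Measure ℝ) [IsFiniteMeasure ν] (k i : ℕ)
    (f : ℤ × ℤ → Set ℝ) (hf : ∀ r, f r ⊆ dyadicI r) (hfm : ∀ r, MeasurableSet (f r)) :
    ν.real (⋃ r ∈ Lgen k i, f r) = ∑ r ∈ Lgen k i, ν.real (f r) :=
  measureReal_biUnion_finset
    (fun r hr r' hr' h => (pairwiseDisjoint_Lgen k i hr hr' h).mono (hf r) (hf r'))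
    (fun r _ => hfm r)

lemma integral_muDensity (ν : Measure ℝ) [IsFiniteMeasure ν] (k i : ℕ) :
    ∫ x, muDensity k i x ∂ν =
      ∑ i' ∈ Finset.range i, 6 ^ i' * ν.real (⋃ q ∈ Lgen k i', suppOf (chainI q (2 * k))) +
        6 ^ i * ν.real (⋃ q ∈ Lgen k i, suppOf q) := by
  have hm : ∀ f : ℤ × ℤ → Set ℝ, (∀ r, MeasurableSet (f r)) → ∀ i',
      MeasurableSet (⋃ q ∈ Lgen k i', f q) :=
    fun f hf i' => Finset.measurableSet_biUnion _ fun r _ => hf r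
  have hint : ∀ (c : ℝ) {S : Set ℝ}, MeasurableSet S →
      Integrable (fun x => c * S.indicator (fun _ => (1 : ℝ)) x) ν :=
    fun c S hS => ((integrable_const (1 : ℝ)).indicator hS).const_mul c
  have hA := hm _ fun r => measurableSet_suppOf (chainI r (2 * k))
  have hB := hm _ measurableSet_suppOf i
  unfold muDensity
  rw [integral_add (integrable_finsetSum _ fun i' _ => hint _ (hA i')) (hint _ hB),
    integral_finsetSum _ fun i' _ => hint _ (hA i')]
  simp only [integral_const_mul]
  congr 1
  · exact Finset.sum_congr rfl fun i' _ => congrArg _ (integral_indicator_one (hA i'))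
  · exact congrArg _ (integral_indicator_one hB)

lemma setIntegral_muDensity_succ {k i j : ℕ} {q : ℤ × ℤ} (hq : q ∈ Lgen k j) (hji : j ≤ i) :
    ∫ x in dyadicI q, muDensity k (i + 1) x = ∫ x in dyadicI q, muDensity k i x := by
  have : IsFiniteMeasure (volume.restrict (dyadicI q)) :=
    isFiniteMeasure_restrict.2 measure_Ico_lt_top.ne
  set ν := volume.restrict (dyadicI q)
  have hbal : ∑ r ∈ Lgen k i, ν.real (suppOf (chainI r (2 * k))) +
      6 * ∑ r ∈ Lgen k i, ν.real (offspringSupport k r) = ∑ r ∈ Lgen k i, ν.real (suppOf r) := by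
    rw [Finset.mul_sum, ← Finset.sum_add_distrib]
    exact Finset.sum_congr rfl fun r hr =>
      measureReal_restrict_mass_balance k r (dyadicI_subset_or_disjoint_of_mem_Lgen hq hji hr)
  rw [integral_muDensity, integral_muDensity, Finset.sum_range_succ, iUnion_suppOf_Lgen_succ,
    measureReal_biUnion_Lgen ν k i _
      (fun r => (suppOf_subset_dyadicI _).trans (dyadicI_chainI_subset r _))
      (fun r => measurableSet_suppOf _),
    measureReal_biUnion_Lgen ν k i _ (offspringSupport_subset_dyadicI k)
      (measurableSet_offspringSupport k),
    measureReal_biUnion_Lgen ν k i _ suppOf_subset_dyadicI measurableSet_suppOf,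
    ← hbal, pow_succ]
  ring

theorem stmt15_general (k : ℕ) (j : ℕ) (q : ℤ × ℤ) (hq : q ∈ Lgen k j) :
    (∫ x in dyadicI q, muDensity k (j+1) x) = (∫ x in dyadicI q, muDensity k j x) ∧
    ∀ i : ℕ, j ≤ i →
      (∫ x in dyadicI q, muDensity k i x) = (∫ x in dyadicI q, muDensity k j x) := by
  refine ⟨setIntegral_muDensity_succ hq le_rfl, fun i hi => ?_⟩
  induction i, hi using Nat.le_induction with
  | base => rfl
  | succ i hi ih => rw [setIntegral_muDensity_succ hq hi, ih]

/-- Measure preservation: for every stopping interval `L ∈ 𝓛_j`,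
`μ_{j+1}(L) = μ_j(L)`, and consequently `μ_i(L) = μ_j(L)` for all `i ≥ j`. -/
theorem stmt15 (k : ℕ) (hk : 1 ≤ k) (j : ℕ) (q : ℤ × ℤ) (hq : q ∈ Lgen k j) :
    (∫ x in dyadicI q, muDensity k (j+1) x) = (∫ x in dyadicI q, muDensity k j x) ∧
    ∀ i : ℕ, j ≤ i →
      (∫ x in dyadicI q, muDensity k i x) = (∫ x in dyadicI q, muDensity k j x) :=
  stmt15_general k j q hq
end

section
/- In the inductive construction, the stopping intervals at each stage satisfy ∑_{L ∈ L_j} |L| ≤ ((1 − 2^{-4k})/6)^j for all j ≥ 0. -/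
open MeasureTheory Set

/-! The children `L'(I_i⁺)`, `i < 2k`, of `L ∈ 𝓛_j` have lengths `4^{-i}|L|/8`, which sum to
`(1 - 2^{-4k})|L|/6`; since coincidences among children of different parents can only lower the
total, each generation shrinks the total length by at least this factor. -/

lemma volume_dyadicI_toReal (q : ℤ × ℤ) : (volume (dyadicI q)).toReal = 2 ^ q.1 := by
  rw [dyadicI, Real.volume_Ico, ← mul_sub, add_sub_cancel_left, mul_one]
  exact ENNReal.toReal_ofReal (zpow_pos two_pos _).le

lemma Lgen_succ (k j : ℕ) :
    Lgen k (j + 1) = (Lgen k j ×ˢ Finset.range (2 * k)).image (fun p => Lprime p.1 p.2) := by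
  ext; simp [Lgen, and_assoc]

lemma zpow_Lprime_fst (q : ℤ × ℤ) (i : ℕ) :
    (2:ℝ) ^ (Lprime q i).1 = 2 ^ q.1 / 8 * (1 / 4) ^ i := by
  rw [show (Lprime q i).1 = q.1 - (2 * i + 3 : ℕ) by simp [Lprime, chainI]; ring,
    zpow_sub₀ two_ne_zero, zpow_natCast, pow_add, pow_mul,
    one_div, inv_pow, show (2:ℝ) ^ 3 = 8 by norm_num, show (2:ℝ) ^ 2 = 4 by norm_num]
  field_simp

lemma sum_zpow_Lprime_fst (k : ℕ) (q : ℤ × ℤ) :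
    ∑ i ∈ Finset.range (2 * k), (2:ℝ) ^ (Lprime q i).1
      = 2 ^ q.1 * ((1 - ((2:ℝ) ^ (4 * k))⁻¹) / 6) := by
  have h : ((1:ℝ) / 4) ^ (2 * k) = ((2:ℝ) ^ (4 * k))⁻¹ := by
    rw [one_div, inv_pow, show (4:ℝ) = 2 ^ 2 by norm_num, ← pow_mul]; ring_nf
  simp only [zpow_Lprime_fst, ← Finset.mul_sum]
  rw [geom_sum_eq (by norm_num), h]
  ring

lemma sum_volume_Lgen_succ_le (k j : ℕ) :
    ∑ q ∈ Lgen k (j + 1), (volume (dyadicI q)).toReal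
      ≤ (∑ q ∈ Lgen k j, (volume (dyadicI q)).toReal) * ((1 - ((2:ℝ) ^ (4 * k))⁻¹) / 6) := by
  calc ∑ q ∈ Lgen k (j + 1), (volume (dyadicI q)).toReal
      ≤ ∑ p ∈ Lgen k j ×ˢ Finset.range (2 * k), (volume (dyadicI (Lprime p.1 p.2))).toReal := by
        rw [Lgen_succ]
        exact Finset.sum_image_le_of_nonneg fun _ _ => ENNReal.toReal_nonneg
    _ = _ := by
        simp only [Finset.sum_product, volume_dyadicI_toReal, sum_zpow_Lprime_fst, Finset.sum_mul]

theorem stmt17_general (k : ℕ) (j : ℕ) :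
    ∑ q ∈ Lgen k j, (volume (dyadicI q)).toReal
      ≤ ((1 - ((2:ℝ)^(4*k))⁻¹) / 6)^j := by
  have hratio : 0 ≤ (1 - ((2:ℝ) ^ (4 * k))⁻¹) / 6 := by
    have : ((2:ℝ) ^ (4 * k))⁻¹ ≤ 1 := inv_le_one_of_one_le₀ (one_le_pow₀ one_le_two)
    linarith
  induction j with
  | zero => simp [Lgen, volume_dyadicI_toReal]
  | succ j ih =>
    rw [pow_succ]
    exact (sum_volume_Lgen_succ_le k j).trans (mul_le_mul_of_nonneg_right ih hratio)

/-- Total length of the stopping intervals of generation `j`: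
`∑_{L ∈ 𝓛_j} |L| ≤ ((1 - 2^{-4k})/6)^j`. -/
theorem stmt17 (k : ℕ) (hk : 1 ≤ k) (j : ℕ) :
    ∑ q ∈ Lgen k j, (volume (dyadicI q)).toReal
      ≤ ((1 - ((2:ℝ)^(4*k))⁻¹) / 6)^j :=
  stmt17_general k j
end
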